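/- arXiv:1905.03773 — 10 statements merged into one kernel-verified Lean document; each statement's English description precedes it below -/
import Mathlib

section
/- Let X_1, …, X_n (n ≥ 2) be mutually independent nonnegative regular random variables with ex ante optimal revenue OPT > 0. Suppose that for every i the price at quantile 1/4 satisfies v_{X_i}(1/4) < OPT/2. Then the expected second-highest value among X_1, …, X_n (i.e., the revenue of the second-price auction without any duplicate) is at least OPT/40. -/
open MeasureTheory ProbabilityTheory

/-- The price of `X` at quantile `q`: `v_X(q) = inf {t ≥ 0 : P(X > t) ≤ q}`. -/
noncomputable def price {Ω : Type*} [MeasurableSpace Ω] (μ : Measure Ω) (X : Ω → ℝ)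
    (q : ℝ) : ℝ :=
  sInf {t : ℝ | 0 ≤ t ∧ (μ {ω | t < X ω}).toReal ≤ q}

/-- The revenue curve of `X`: `R_X(q) = q · v_X(q)`. -/
noncomputable def revCurve {Ω : Type*} [MeasurableSpace Ω] (μ : Measure Ω) (X : Ω → ℝ)
    (q : ℝ) : ℝ :=
  q * price μ X q

/-- The second-highest value of a finite family of reals: `max_{i ≠ j} min (x i) (x j)`. -/
noncomputable def secondHighest {I : Type*} (x : I → ℝ) : ℝ :=
  ⨆ p : {p : I × I // p.1 ≠ p.2}, min (x p.1.1) (x p.1.2)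

/-!
Fix a feasible quantile vector `q` with `∑ Rᵢ(qᵢ) > 9/10 · OPT`. Regularity gives
`Rᵢ(q) ≤ vᵢ(1/4) < OPT/2`, so the bidders split into two disjoint groups, each carrying
revenue at least `OPT/5`. Since `Rᵢ` is concave with `Rᵢ(1) = 0`, a bidder with `vᵢ(qᵢ) ≥ θ`
reaches `θ` with probability at least `Rᵢ(qᵢ)/(θ + Rᵢ(qᵢ))`, and multiplying these failure bounds
over a group shows that for `θ = OPT/10` some member of each group bids at least `θ` with
probability at least `1/2`. The two groups are independent, so the second-highest bid is at
least `θ` with probability at least `1/4`, whence the bound `OPT/40`.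

Integrability comes from the same curves: `t · P(Xᵢ > t) ≤ max Rᵢ`, so for independent `Xᵢ, Xⱼ`
the tail of `min Xᵢ Xⱼ` is `O(t⁻²)`.
-/

section Price

variable {Ω : Type*} [MeasurableSpace Ω] {μ : Measure Ω} {X : Ω → ℝ}

lemma price_nonneg (q : ℝ) : 0 ≤ price μ X q :=
  Real.sInf_nonneg fun _ ht => ht.1

lemma price_le {t q : ℝ} (ht : 0 ≤ t) (h : μ.real {ω | t < X ω} ≤ q) : price μ X q ≤ t :=
  csInf_le ⟨0, fun _ hs => hs.1⟩ ⟨ht, h⟩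

lemma lt_measureReal_of_lt_price {t q : ℝ} (ht : 0 ≤ t) (h : t < price μ X q) :
    q < μ.real {ω | t < X ω} := by
  by_contra! h'
  exact (price_le ht h').not_gt h

variable [IsProbabilityMeasure μ]

lemma price_one : price μ X 1 = 0 :=
  le_antisymm (price_le le_rfl measureReal_le_one) (price_nonneg 1)

lemma revCurve_one : revCurve μ X 1 = 0 := by
  simp [revCurve, price_one]

lemma exists_measureReal_lt_le (hX : Measurable X) {q : ℝ} (hq : 0 < q) :
    ∃ t, 0 ≤ t ∧ μ.real {ω | t < X ω} ≤ q := by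
  have hlim : Filter.Tendsto (fun t : ℝ => μ {ω | t < X ω}) Filter.atTop (nhds 0) := by
    have hempty : ⋂ t : ℝ, {ω | t < X ω} = ∅ :=
      Set.eq_empty_of_forall_notMem fun ω hω =>
        lt_irrefl (X ω) (Set.mem_iInter.1 hω (X ω))
    simpa [Function.comp_def, hempty] using tendsto_measure_iInter_atTop
      (fun t => (measurableSet_lt measurable_const hX).nullMeasurableSet)
      (fun s t hst ω (hω : t < X ω) => lt_of_le_of_lt hst hω) ⟨0, measure_ne_top μ _⟩
  obtain ⟨t, ht, hμ⟩ := ((Filter.eventually_ge_atTop 0).and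
    (hlim.eventually_lt_const (ENNReal.ofReal_pos.2 hq))).exists
  exact ⟨t, ht, ENNReal.toReal_le_of_le_ofReal hq.le hμ.le⟩

lemma le_price_of_lt_measureReal (hX : Measurable X) {t q : ℝ} (hq : 0 < q)
    (h : q < μ.real {ω | t < X ω}) : t ≤ price μ X q := by
  obtain ⟨s, hs⟩ := exists_measureReal_lt_le (μ := μ) hX hq
  refine le_csInf ⟨s, hs⟩ fun u hu => ?_
  by_contra! hut
  have hsub : {ω | t < X ω} ⊆ {ω | u < X ω} := fun ω hω => hut.trans hω
  exact lt_irrefl q (h.trans_le ((measureReal_mono hsub).trans hu.2))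

lemma price_le_price (hX : Measurable X) {q q' : ℝ} (hq : 0 < q) (hqq' : q ≤ q') :
    price μ X q' ≤ price μ X q :=
  csInf_le_csInf ⟨0, fun _ ht => ht.1⟩ (exists_measureReal_lt_le hX hq)
    fun _ ht => ⟨ht.1, ht.2.trans hqq'⟩

lemma le_measureReal_le_of_le_price (hX : Measurable X) {q θ : ℝ} (hθ : 0 < θ)
    (h : θ ≤ price μ X q) : q ≤ μ.real {ω | θ ≤ X ω} := by
  have hInter : ⋂ r > (0 : ℝ), {ω | θ - r < X ω} = {ω | θ ≤ X ω} := by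
    ext ω
    simp only [Set.mem_iInter, Set.mem_ofPred_eq, sub_lt_iff_lt_add]
    exact le_iff_forall_pos_lt_add.symm
  have hlim := tendsto_measure_biInter_gt (μ := μ) (a := (0 : ℝ))
    (fun r _ => (measurableSet_lt measurable_const hX).nullMeasurableSet)
    (fun r r' _ hrr' ω (hω : θ - r < X ω) => show θ - r' < X ω by linarith)
    ⟨1, one_pos, measure_ne_top μ _⟩
  rw [hInter] at hlim
  have hbound : ∀ᶠ r in nhdsWithin (0 : ℝ) (Set.Ioi 0),
      ENNReal.ofReal q ≤ μ {ω | θ - r < X ω} := by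
    filter_upwards [Ioo_mem_nhdsGT hθ] with r hr
    exact ENNReal.ofReal_le_of_le_toReal
      (lt_measureReal_of_lt_price (by linarith [hr.2]) (by linarith [hr.1])).le
  exact (ENNReal.ofReal_le_iff_le_toReal (measure_ne_top μ _)).1 (ge_of_tendsto hlim hbound)

end Price

section Regular

variable {Ω : Type*} [MeasurableSpace Ω] {μ : Measure Ω} [IsProbabilityMeasure μ] {X : Ω → ℝ}

lemma mul_measureReal_lt_le (hX : Measurable X) {M : ℝ}
    (hM : ∀ q ∈ Set.Icc (0 : ℝ) 1, revCurve μ X q ≤ M) {t : ℝ} (ht : 0 < t) :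
    t * μ.real {ω | t < X ω} ≤ M := by
  have hM0 : 0 ≤ M := by simpa [revCurve] using hM 0 ⟨le_rfl, zero_le_one⟩
  rw [← le_div_iff₀' ht]
  refine le_of_forall_lt_imp_le_of_dense fun r hr => ?_
  rcases le_or_gt r 0 with hr0 | hr0
  · exact hr0.trans (by positivity)
  rw [le_div_iff₀' ht]
  calc t * r ≤ price μ X r * r :=
        mul_le_mul_of_nonneg_right (le_price_of_lt_measureReal hX hr0 hr) hr0.le
    _ = revCurve μ X r := mul_comm _ _
    _ ≤ M := hM r ⟨hr0.le, hr.le.trans measureReal_le_one⟩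

lemma mul_revCurve_le_mul_revCurve (hreg : ConcaveOn ℝ (Set.Icc 0 1) (revCurve μ X)) {a b : ℝ}
    (ha : 0 ≤ a) (hab : a ≤ b) (hb : b ≤ 1) :
    (1 - b) * revCurve μ X a ≤ (1 - a) * revCurve μ X b := by
  rcases hab.eq_or_lt with rfl | hab
  · exact le_rfl
  have ha1 : 0 < 1 - a := by linarith
  set l := (1 - b) / (1 - a) with hl
  have hl0 : 0 ≤ l := div_nonneg (by linarith) ha1.le
  have hl1 : 0 ≤ 1 - l := by rw [sub_nonneg, div_le_one ha1]; linarith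
  have hcomb : l • a + (1 - l) • (1 : ℝ) = b := by
    simp only [smul_eq_mul, hl]; field_simp; ring
  have key := hreg.2 ⟨ha, by linarith⟩ ⟨zero_le_one, le_rfl⟩ hl0 hl1 (add_sub_cancel l 1)
  rw [hcomb, revCurve_one, smul_eq_mul, smul_eq_mul, mul_zero, add_zero] at key
  calc (1 - b) * revCurve μ X a = (1 - a) * (l * revCurve μ X a) := by
        rw [hl]; field_simp
    _ ≤ (1 - a) * revCurve μ X b := by gcongr

lemma revCurve_le_price_quarter (hreg : ConcaveOn ℝ (Set.Icc 0 1) (revCurve μ X))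
    (hX : Measurable X) {q : ℝ} (hq : q ∈ Set.Icc (0 : ℝ) 1) :
    revCurve μ X q ≤ price μ X (1 / 4) := by
  rcases le_or_gt (1 / 4) q with hq4 | hq4
  · calc revCurve μ X q ≤ 1 * price μ X q :=
          mul_le_mul_of_nonneg_right hq.2 (price_nonneg q)
      _ ≤ price μ X (1 / 4) := by
          rw [one_mul]; exact price_le_price hX (by norm_num) hq4
  · have key := mul_revCurve_le_mul_revCurve hreg hq.1 hq4.le (by norm_num)
    simp only [revCurve] at key ⊢
    nlinarith [hq.1, price_nonneg (μ := μ) (X := X) (1 / 4)]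

lemma measureReal_lt_le_div (hreg : ConcaveOn ℝ (Set.Icc 0 1) (revCurve μ X)) (hX : Measurable X)
    {q θ : ℝ} (hq : q ∈ Set.Icc (0 : ℝ) 1) (hθ : 0 < θ) (hθq : θ ≤ price μ X q) :
    μ.real {ω | X ω < θ} ≤ θ / (θ + revCurve μ X q) := by
  set s := revCurve μ X q
  have hs : 0 ≤ s := mul_nonneg hq.1 (price_nonneg q)
  set p := s / (θ + s) with hp
  have hp1 : p < 1 := (div_lt_one (by positivity)).2 (by linarith)
  suffices hpθ : p ≤ μ.real {ω | θ ≤ X ω} by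
    have hcompl : {ω | X ω < θ} = {ω | θ ≤ X ω}ᶜ := by ext; simp
    have h1p : 1 - p = θ / (θ + s) := by rw [hp]; field_simp; ring
    rw [hcompl, probReal_compl_eq_one_sub (measurableSet_le measurable_const hX), ← h1p]
    linarith
  rcases le_or_gt p q with hpq | hqp
  · exact hpq.trans (le_measureReal_le_of_le_price hX hθ hθq)
  -- the chord from `(q, s)` to `(1, 0)` has height `θ * p` at `p`, so the price at `p` is `≥ θ`
  have hp0 : 0 < p := hq.1.trans_lt hqp
  have hRp : 0 ≤ revCurve μ X p := mul_nonneg hp0.le (price_nonneg p)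
  refine le_measureReal_le_of_le_price hX hθ (le_of_mul_le_mul_left ?_ hp0)
  calc p * θ = (1 - p) * s := by rw [hp]; field_simp; ring
    _ ≤ (1 - q) * revCurve μ X p := mul_revCurve_le_mul_revCurve hreg hq.1 hqp.le hp1.le
    _ ≤ revCurve μ X p := by nlinarith [hq.1]

end Regular

lemma prod_div_add_le_div_add_sum {ι : Type*} (s : Finset ι) {f : ι → ℝ} {θ : ℝ} (hθ : 0 < θ)
    (hf : ∀ i ∈ s, 0 ≤ f i) : ∏ i ∈ s, θ / (θ + f i) ≤ θ / (θ + ∑ i ∈ s, f i) := by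
  classical
  induction s using Finset.induction_on with
  | empty => simp [hθ.ne']
  | insert a s ha ih =>
    rw [Finset.forall_mem_insert] at hf
    have hsum : 0 ≤ ∑ i ∈ s, f i := Finset.sum_nonneg hf.2
    rw [Finset.prod_insert ha, Finset.sum_insert ha]
    calc θ / (θ + f a) * ∏ i ∈ s, θ / (θ + f i)
        ≤ θ / (θ + f a) * (θ / (θ + ∑ i ∈ s, f i)) := by
          gcongr
          · exact div_nonneg hθ.le (by linarith [hf.1])
          · exact ih hf.2
      _ ≤ θ / (θ + (f a + ∑ i ∈ s, f i)) := by
          rw [div_mul_div_comm, div_le_div_iff₀ (by nlinarith [hf.1]) (by linarith [hf.1])]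
          nlinarith [mul_nonneg hf.1 hsum]

section SecondHighest

variable {I : Type*}

lemma secondHighest_nonneg {x : I → ℝ} (hx : ∀ i, 0 ≤ x i) : 0 ≤ secondHighest x :=
  Real.iSup_nonneg fun _ => le_min (hx _) (hx _)

lemma le_secondHighest [Finite I] {x : I → ℝ} {θ : ℝ} {i j : I} (hij : i ≠ j) (hi : θ ≤ x i)
    (hj : θ ≤ x j) : θ ≤ secondHighest x :=
  (le_min hi hj).trans <|
    le_ciSup (f := fun p : {p : I × I // p.1 ≠ p.2} => min (x p.1.1) (x p.1.2))
      (Set.finite_range _).bddAbove ⟨(i, j), hij⟩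

lemma secondHighest_le_sum [Fintype I] [DecidableEq I] {x : I → ℝ} (hx : ∀ i, 0 ≤ x i) :
    secondHighest x ≤ ∑ p : {p : I × I // p.1 ≠ p.2}, min (x p.1.1) (x p.1.2) :=
  Real.iSup_le
    (fun p => Finset.single_le_sum
      (f := fun p : {p : I × I // p.1 ≠ p.2} => min (x p.1.1) (x p.1.2))
      (fun _ _ => le_min (hx _) (hx _)) (Finset.mem_univ p))
    (Finset.sum_nonneg fun _ _ => le_min (hx _) (hx _))

variable {Ω : Type*} [MeasurableSpace Ω] {μ : Measure Ω}

lemma measurable_secondHighest [Countable I] {X : I → Ω → ℝ} (hX : ∀ i, Measurable (X i)) :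
    Measurable fun ω => secondHighest fun i => X i ω :=
  Measurable.iSup fun p => (hX p.1.1).min (hX p.1.2)

lemma integrable_of_sq_mul_measureReal_lt_le [IsFiniteMeasure μ] {f : Ω → ℝ} (hf : Measurable f)
    (hf0 : 0 ≤ f) {C : ℝ} (hC : ∀ t > 0, t ^ 2 * μ.real {ω | t < f ω} ≤ C) :
    Integrable f μ := by
  set K := μ.real Set.univ + C
  have hbound : ∀ t > (0 : ℝ), μ {ω | t < f ω} ≤ ENNReal.ofReal (K * (1 + t ^ 2)⁻¹) := by
    intro t ht
    rw [← ofReal_measureReal]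
    refine ENNReal.ofReal_le_ofReal ((le_mul_inv_iff₀ (by positivity)).2 ?_)
    linarith [hC t ht, measureReal_mono (μ := μ) (Set.subset_univ {ω | t < f ω})]
  refine ⟨hf.aestronglyMeasurable, ?_⟩
  rw [hasFiniteIntegral_iff_ofReal (ae_of_all _ hf0),
    lintegral_eq_lintegral_meas_lt μ (ae_of_all _ hf0) hf.aemeasurable]
  calc ∫⁻ t in Set.Ioi 0, μ {ω | t < f ω}
      ≤ ∫⁻ t in Set.Ioi 0, ENNReal.ofReal (K * (1 + t ^ 2)⁻¹) :=
        setLIntegral_mono' measurableSet_Ioi hbound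
    _ ≤ ∫⁻ t, ENNReal.ofReal (K * (1 + t ^ 2)⁻¹) := setLIntegral_le_lintegral _ _
    _ < ⊤ := (integrable_inv_one_add_sq.const_mul K).lintegral_lt_top

lemma integrable_min_of_indepFun [IsFiniteMeasure μ] {X Y : Ω → ℝ} (hXY : IndepFun X Y μ)
    (hX : Measurable X) (hY : Measurable Y) (hX0 : 0 ≤ X) (hY0 : 0 ≤ Y) {M N : ℝ}
    (hXt : ∀ t > 0, t * μ.real {ω | t < X ω} ≤ M) (hYt : ∀ t > 0, t * μ.real {ω | t < Y ω} ≤ N) :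
    Integrable (fun ω => min (X ω) (Y ω)) μ := by
  refine integrable_of_sq_mul_measureReal_lt_le (hX.min hY) (fun ω => le_min (hX0 ω) (hY0 ω))
    (C := M * N) fun t ht => ?_
  have hinter : {ω | t < min (X ω) (Y ω)} = X ⁻¹' Set.Ioi t ∩ Y ⁻¹' Set.Ioi t := by
    ext; simp
  have hprod : μ.real {ω | t < min (X ω) (Y ω)} = μ.real {ω | t < X ω} * μ.real {ω | t < Y ω} := by
    rw [hinter, measureReal_def, hXY.measure_inter_preimage_eq_mul _ _ measurableSet_Ioi
      measurableSet_Ioi, ENNReal.toReal_mul]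
    rfl
  rw [hprod]
  calc t ^ 2 * (μ.real {ω | t < X ω} * μ.real {ω | t < Y ω})
      = (t * μ.real {ω | t < X ω}) * (t * μ.real {ω | t < Y ω}) := by ring
    _ ≤ M * N := mul_le_mul (hXt t ht) (hYt t ht) (by positivity)
        ((by positivity : (0 : ℝ) ≤ t * μ.real {ω | t < X ω}).trans (hXt t ht))

lemma integrable_secondHighest [Fintype I] [DecidableEq I] {X : I → Ω → ℝ}
    (hX : ∀ i, Measurable (X i)) (hX0 : ∀ i ω, 0 ≤ X i ω)
    (hmin : ∀ i j, i ≠ j → Integrable (fun ω => min (X i ω) (X j ω)) μ) :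
    Integrable (fun ω => secondHighest fun i => X i ω) μ := by
  refine (integrable_finsetSum Finset.univ
    fun (p : {p : I × I // p.1 ≠ p.2}) _ => hmin p.1.1 p.1.2 p.2).mono'
    (measurable_secondHighest hX).aestronglyMeasurable (ae_of_all _ fun ω => ?_)
  rw [Real.norm_of_nonneg (secondHighest_nonneg (hX0 · ω))]
  exact secondHighest_le_sum (hX0 · ω)

end SecondHighest

lemma exists_sub_div_two_le_sum_and_sum_compl {ι : Type*} [Fintype ι] [DecidableEq ι]
    {f : ι → ℝ} {D : ℝ} (hf0 : ∀ i, 0 ≤ f i) (hfD : ∀ i, f i ≤ D) (hD : 0 ≤ D) :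
    ∃ A : Finset ι, (∑ i, f i - D) / 2 ≤ ∑ i ∈ A, f i ∧ (∑ i, f i - D) / 2 ≤ ∑ i ∈ Aᶜ, f i := by
  set T := ∑ i, f i
  have hT : 0 ≤ T := Finset.sum_nonneg fun i _ => hf0 i
  obtain ⟨A, hAmem, hAmax⟩ :=
    (Finset.univ.filter fun A : Finset ι => ∑ i ∈ A, f i ≤ (T + D) / 2).exists_max_image
      (fun A => ∑ i ∈ A, f i) ⟨∅, Finset.mem_filter.2 ⟨Finset.mem_univ _, by simp; linarith⟩⟩
  have hAle : ∑ i ∈ A, f i ≤ (T + D) / 2 := (Finset.mem_filter.1 hAmem).2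
  have hsplit : ∑ i ∈ A, f i + ∑ i ∈ Aᶜ, f i = T := Finset.sum_add_sum_compl A f
  refine ⟨A, ?_, by linarith⟩
  by_contra! hlt
  have hcompl_nonpos : ∀ e ∈ Aᶜ, f e ≤ 0 := by
    intro e he
    have heA : e ∉ A := Finset.mem_compl.1 he
    have hins := hAmax (insert e A) <| Finset.mem_filter.2
      ⟨Finset.mem_univ _, by rw [Finset.sum_insert heA]; linarith [hfD e]⟩
    rw [Finset.sum_insert heA] at hins
    linarith
  linarith [Finset.sum_nonpos hcompl_nonpos]

section Independence

variable {Ω ι : Type*} [MeasurableSpace Ω] {μ : Measure Ω} {X : ι → Ω → ℝ}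

lemma measureReal_exists_le_eq [IsProbabilityMeasure μ] (hindep : iIndepFun X μ)
    (hX : ∀ i, Measurable (X i)) (A : Finset ι) (θ : ℝ) :
    μ.real {ω | ∃ i ∈ A, θ ≤ X i ω} = 1 - ∏ i ∈ A, μ.real {ω | X i ω < θ} := by
  have hcompl : {ω | ∃ i ∈ A, θ ≤ X i ω} = (⋂ i ∈ A, X i ⁻¹' Set.Iio θ)ᶜ := by
    ext; simp
  rw [hcompl, probReal_compl_eq_one_sub
      (Finset.measurableSet_biInter A fun i _ => hX i measurableSet_Iio),
    measureReal_def, hindep.measure_inter_preimage_eq_mul A (fun i _ => measurableSet_Iio),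
    ENNReal.toReal_prod]
  rfl

lemma measureReal_exists_le_inter (hindep : iIndepFun X μ) (hX : ∀ i, Measurable (X i))
    {A B : Finset ι} (hAB : Disjoint A B) (θ : ℝ) :
    μ.real ({ω | ∃ i ∈ A, θ ≤ X i ω} ∩ {ω | ∃ j ∈ B, θ ≤ X j ω}) =
      μ.real {ω | ∃ i ∈ A, θ ≤ X i ω} * μ.real {ω | ∃ j ∈ B, θ ≤ X j ω} := by
  have hpre : ∀ C : Finset ι, {ω | ∃ i ∈ C, θ ≤ X i ω} =
      (fun ω (i : C) => X i ω) ⁻¹' {x | ∃ i, θ ≤ x i} := by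
    intro C; ext; simp
  have hmeas : ∀ C : Finset ι, MeasurableSet {x : C → ℝ | ∃ i, θ ≤ x i} := by
    intro C
    simp_rw [Set.ofPred_exists]
    exact MeasurableSet.iUnion fun i => measurableSet_le measurable_const (measurable_pi_apply i)
  simp only [measureReal_def, hpre]
  rw [(hindep.indepFun_finset A B hAB hX).measure_inter_preimage_eq_mul _ _ (hmeas A) (hmeas B),
    ENNReal.toReal_mul]

lemma mul_measureReal_le_integral_secondHighest [Finite ι] [IsFiniteMeasure μ]
    (hX0 : ∀ i ω, 0 ≤ X i ω)
    (hint : Integrable (fun ω => secondHighest fun i => X i ω) μ) {A B : Finset ι}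
    (hAB : Disjoint A B) {θ : ℝ} (hθ : 0 ≤ θ) :
    θ * μ.real ({ω | ∃ i ∈ A, θ ≤ X i ω} ∩ {ω | ∃ j ∈ B, θ ≤ X j ω}) ≤
      ∫ ω, secondHighest (fun i => X i ω) ∂μ := by
  have hsub : {ω | ∃ i ∈ A, θ ≤ X i ω} ∩ {ω | ∃ j ∈ B, θ ≤ X j ω} ⊆
      {ω | θ ≤ secondHighest fun i => X i ω} := by
    rintro ω ⟨⟨i, hiA, hi⟩, ⟨j, hjB, hj⟩⟩
    exact le_secondHighest (fun hij => Finset.disjoint_left.1 hAB hiA (by rwa [hij])) hi hj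
  exact (mul_le_mul_of_nonneg_left (measureReal_mono hsub) hθ).trans <|
    mul_meas_ge_le_integral_of_nonneg (ae_of_all _ fun ω => secondHighest_nonneg (hX0 · ω)) hint θ

lemma one_half_le_measureReal_exists_le [IsProbabilityMeasure μ] (hindep : iIndepFun X μ)
    (hX : ∀ i, Measurable (X i)) (hreg : ∀ i, ConcaveOn ℝ (Set.Icc 0 1) (revCurve μ (X i)))
    {q : ι → ℝ} (hq : ∀ i, q i ∈ Set.Icc (0 : ℝ) 1) (C : Finset ι) {θ : ℝ} (hθ : 0 < θ)
    (hC : θ * (1 + ∑ i ∈ C, q i) ≤ ∑ i ∈ C, revCurve μ (X i) (q i)) :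
    1 / 2 ≤ μ.real {ω | ∃ i ∈ C, θ ≤ X i ω} := by
  set f : ι → ℝ := fun i => if θ ≤ price μ (X i) (q i) then revCurve μ (X i) (q i) else 0
  have hf0 : ∀ i, 0 ≤ f i := fun i => by
    unfold f; split_ifs
    exacts [mul_nonneg (hq i).1 (price_nonneg _), le_rfl]
  have hfail : ∀ i, μ.real {ω | X i ω < θ} ≤ θ / (θ + f i) := fun i => by
    unfold f; split_ifs with h
    · exact measureReal_lt_le_div (hreg i) (hX i) (hq i) hθ h
    · simp [hθ.ne']
  have hsum : θ ≤ ∑ i ∈ C, f i := by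
    have hterm : ∀ i, revCurve μ (X i) (q i) - θ * q i ≤ f i := fun i => by
      unfold f; split_ifs with h
      · nlinarith [(hq i).1]
      · simp only [revCurve]; nlinarith [(hq i).1]
    calc θ ≤ ∑ i ∈ C, (revCurve μ (X i) (q i) - θ * q i) := by
          rw [Finset.sum_sub_distrib, ← Finset.mul_sum]; linarith
      _ ≤ ∑ i ∈ C, f i := Finset.sum_le_sum fun i _ => hterm i
  have hprod : ∏ i ∈ C, μ.real {ω | X i ω < θ} ≤ 1 / 2 :=
    calc ∏ i ∈ C, μ.real {ω | X i ω < θ} ≤ ∏ i ∈ C, θ / (θ + f i) :=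
          Finset.prod_le_prod (fun _ _ => measureReal_nonneg) fun i _ => hfail i
      _ ≤ θ / (θ + ∑ i ∈ C, f i) := prod_div_add_le_div_add_sum C hθ fun i _ => hf0 i
      _ ≤ θ / (θ + θ) := div_le_div_of_nonneg_left hθ.le (by positivity) (by linarith)
      _ = 1 / 2 := by field_simp; norm_num
  rw [measureReal_exists_le_eq hindep hX]
  linarith

end Independence

theorem stmt_1_general {Ω : Type*} [MeasurableSpace Ω] (μ : Measure Ω) [IsProbabilityMeasure μ]
    (n : ℕ) (X : Fin n → Ω → ℝ)
    (hmeas : ∀ i, Measurable (X i))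
    (hnn : ∀ i ω, 0 ≤ X i ω)
    (hindep : iIndepFun X μ)
    (hreg : ∀ i, ConcaveOn ℝ (Set.Icc (0:ℝ) 1) (revCurve μ (X i)))
    (OPT : ℝ) (hOPTpos : 0 < OPT)
    (hOPT : OPT = sSup {r : ℝ | ∃ q : Fin n → ℝ,
      (∀ i, q i ∈ Set.Icc (0:ℝ) 1) ∧ (∑ i, q i ≤ 1) ∧ r = ∑ i, revCurve μ (X i) (q i)})
    (hlow : ∀ i, price μ (X i) (1/4) < OPT / 2) :
    OPT / 40 ≤ ∫ ω, secondHighest (fun i => X i ω) ∂μ := by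
  have hRq : ∀ i, ∀ q ∈ Set.Icc (0 : ℝ) 1, revCurve μ (X i) q ≤ price μ (X i) (1 / 4) :=
    fun i _ hq => revCurve_le_price_quarter (hreg i) (hmeas i) hq
  have hnear : 9 / 10 * OPT < OPT := by linarith
  nth_rewrite 2 [hOPT] at hnear
  obtain ⟨_, ⟨q, hq, hqsum, rfl⟩, hnear⟩ := exists_lt_of_lt_csSup
    (by exact ⟨0, fun _ => 0, fun _ => ⟨le_rfl, zero_le_one⟩, by simp, by simp [revCurve]⟩) hnear
  obtain ⟨A, hA, hAc⟩ := exists_sub_div_two_le_sum_and_sum_compl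
    (f := fun i => revCurve μ (X i) (q i))
    (fun i => mul_nonneg (hq i).1 (price_nonneg _))
    (fun i => ((hRq i _ (hq i)).trans (hlow i).le)) (by linarith : 0 ≤ OPT / 2)
  have hhalf : ∀ C : Finset (Fin n), OPT / 5 ≤ ∑ i ∈ C, revCurve μ (X i) (q i) →
      1 / 2 ≤ μ.real {ω | ∃ i ∈ C, OPT / 10 ≤ X i ω} := fun C hC => by
    have hqC : ∑ i ∈ C, q i ≤ 1 := (Finset.sum_le_sum_of_subset_of_nonneg (Finset.subset_univ C)
      fun i _ _ => (hq i).1).trans hqsum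
    exact one_half_le_measureReal_exists_le hindep hmeas hreg hq C (by positivity) (by nlinarith)
  have hint : Integrable (fun ω => secondHighest fun i => X i ω) μ :=
    integrable_secondHighest hmeas hnn fun i j hij =>
      integrable_min_of_indepFun (hindep.indepFun hij) (hmeas i) (hmeas j) (hnn i) (hnn j)
        (fun _ => mul_measureReal_lt_le (hmeas i) (hRq i))
        (fun _ => mul_measureReal_lt_le (hmeas j) (hRq j))
  calc OPT / 40 = OPT / 10 * (1 / 2 * (1 / 2)) := by ring
    _ ≤ OPT / 10 * (μ.real {ω | ∃ i ∈ A, OPT / 10 ≤ X i ω} *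
          μ.real {ω | ∃ j ∈ Aᶜ, OPT / 10 ≤ X j ω}) := by
        gcongr
        exacts [hhalf A (by linarith), hhalf Aᶜ (by linarith)]
    _ ≤ ∫ ω, secondHighest (fun i => X i ω) ∂μ := by
        rw [← measureReal_exists_le_inter hindep hmeas disjoint_compl_right]
        exact mul_measureReal_le_integral_secondHighest hnn hint disjoint_compl_right
          (by positivity)

/-- **The second-price auction without duplicates is a 40-approximation when all prices at
quantile `1/4` are below `OPT/2`.** Here `X 0, …, X (n-1)` are independent nonnegative
regular random variables, `OPT > 0` is their ex ante optimal revenue, and the conclusion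
says the expected second-highest value is at least `OPT/40`. -/
theorem stmt_1 {Ω : Type*} [MeasurableSpace Ω] (μ : Measure Ω) [IsProbabilityMeasure μ]
    (n : ℕ) (hn : 2 ≤ n) (X : Fin n → Ω → ℝ)
    (hmeas : ∀ i, Measurable (X i))
    (hnn : ∀ i ω, 0 ≤ X i ω)
    (hindep : iIndepFun X μ)
    (hreg : ∀ i, ConcaveOn ℝ (Set.Icc (0:ℝ) 1) (revCurve μ (X i)))
    (OPT : ℝ) (hOPTpos : 0 < OPT)
    (hOPT : OPT = sSup {r : ℝ | ∃ q : Fin n → ℝ,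
      (∀ i, q i ∈ Set.Icc (0:ℝ) 1) ∧ (∑ i, q i ≤ 1) ∧ r = ∑ i, revCurve μ (X i) (q i)})
    (hlow : ∀ i, price μ (X i) (1/4) < OPT / 2) :
    OPT / 40 ≤ ∫ ω, secondHighest (fun i => X i ω) ∂μ :=
  stmt_1_general μ n X hmeas hnn hindep hreg OPT hOPTpos hOPT hlow
end

section
/- Let R : ℝ → ℝ be concave on [0,1] with R(t) ≥ 0 for all t ∈ [0,1]. Let ε ∈ [0,1], q ∈ [0, 1/2], and q' ∈ [0,1] be such that |q − q'| ≤ ε · q. Then (1 − ε) · R(q) ≤ R(q') and (1 − ε) · R(q') ≤ R(q). -/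
private lemma aux_up (R : ℝ → ℝ)
    (hconc : ConcaveOn ℝ (Set.Icc (0:ℝ) 1) R) (ε x y : ℝ)
    (hx : x ∈ Set.Icc (0:ℝ) 1) (hy : y ∈ Set.Icc (0:ℝ) 1) (hxy : x ≤ y)
    (hεy : y - x ≤ ε * (1 - x)) (hR1 : 0 ≤ R 1) (hRx : 0 ≤ R x)
    (hε0 : 0 ≤ ε) (hε1 : ε ≤ 1) :
    (1 - ε) * R x ≤ R y := by
  rcases eq_or_lt_of_le hx.2 with h1 | h1
  · have hy1 : y = 1 := le_antisymm hy.2 (h1 ▸ hxy)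
    rw [hy1, ← h1]
    nlinarith
  · set t := (y - x) / (1 - x) with ht_def
    have h1x : 0 < 1 - x := by linarith
    have ht0 : 0 ≤ t := div_nonneg (by linarith) h1x.le
    have htε : t ≤ ε := (div_le_iff₀ h1x).2 (by linarith)
    have ht1 : t ≤ 1 := htε.trans hε1
    have hmem1 : (1:ℝ) ∈ Set.Icc (0:ℝ) 1 := by norm_num
    have key := hconc.2 hx hmem1 (show (0:ℝ) ≤ 1 - t by linarith) ht0 (by ring)
    simp only [smul_eq_mul] at key
    have htmul : t * (1 - x) = y - x := div_mul_cancel₀ _ h1x.ne'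
    have hyy : (1 - t) * x + t * 1 = y := by linear_combination htmul
    rw [hyy] at key
    nlinarith [mul_nonneg ht0 hR1, mul_nonneg (sub_nonneg.2 htε) hRx]

private lemma aux_down (R : ℝ → ℝ)
    (hconc : ConcaveOn ℝ (Set.Icc (0:ℝ) 1) R) (ε x y : ℝ)
    (hy : y ∈ Set.Icc (0:ℝ) 1) (hx0 : 0 ≤ x) (hxy : x ≤ y)
    (hεx : (1 - ε) * y ≤ x) (hRy : 0 ≤ R y) (hR0 : 0 ≤ R 0)
    (hε0 : 0 ≤ ε) (hε1 : ε ≤ 1) :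
    (1 - ε) * R y ≤ R x := by
  rcases eq_or_lt_of_le (hy.1) with h0 | h0
  · have hx0' : x = 0 := le_antisymm (h0 ▸ hxy) hx0
    rw [hx0', ← h0]
    nlinarith
  · set s := x / y with hs_def
    have hs0 : 0 ≤ s := div_nonneg hx0 h0.le
    have hs1 : s ≤ 1 := (div_le_one h0).2 hxy
    have hsε : 1 - ε ≤ s := (le_div_iff₀ h0).2 (by linarith)
    have hmem0 : (0:ℝ) ∈ Set.Icc (0:ℝ) 1 := by norm_num
    have key := hconc.2 hmem0 hy (show (0:ℝ) ≤ 1 - s by linarith) hs0 (by ring)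
    simp only [smul_eq_mul] at key
    have hsmul : s * y = x := div_mul_cancel₀ _ h0.ne'
    have hxx : (1 - s) * 0 + s * y = x := by linear_combination hsmul
    rw [hxx] at key
    nlinarith [mul_nonneg (by linarith : (0:ℝ) ≤ 1 - s) hR0,
      mul_nonneg (by linarith : (0:ℝ) ≤ s - (1 - ε)) hRy]

/-- **Claim (reg_delta2).** If `R` is concave and nonnegative on `[0,1]`,
`ε ∈ [0,1]`, `q ∈ [0,1/2]`, `q' ∈ [0,1]` and `|q - q'| ≤ ε·q`, then
`(1-ε)·R(q) ≤ R(q')` and `(1-ε)·R(q') ≤ R(q)`. -/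
theorem stmt_5 (R : ℝ → ℝ)
    (hconc : ConcaveOn ℝ (Set.Icc (0:ℝ) 1) R)
    (hnonneg : ∀ t ∈ Set.Icc (0:ℝ) 1, 0 ≤ R t)
    (ε q q' : ℝ) (hε : ε ∈ Set.Icc (0:ℝ) 1)
    (hq : q ∈ Set.Icc (0:ℝ) (1/2)) (hq' : q' ∈ Set.Icc (0:ℝ) 1)
    (hclose : |q - q'| ≤ ε * q) :
    (1 - ε) * R q ≤ R q' ∧ (1 - ε) * R q' ≤ R q := by
  obtain ⟨hε0, hε1⟩ := hε
  have hqI : q ∈ Set.Icc (0:ℝ) 1 := ⟨hq.1, by linarith [hq.2]⟩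
  have hRq : 0 ≤ R q := hnonneg q hqI
  have hRq' : 0 ≤ R q' := hnonneg q' hq'
  have hR0 : 0 ≤ R 0 := hnonneg 0 (by norm_num)
  have hR1 : 0 ≤ R 1 := hnonneg 1 (by norm_num)
  obtain ⟨hc1, hc2⟩ := abs_le.1 hclose
  constructor
  · rcases le_total q q' with h | h
    · refine aux_up R hconc ε q q' hqI hq' h ?_ hR1 hRq hε0 hε1
      nlinarith [mul_nonneg hε0 (by linarith [hq.2] : (0:ℝ) ≤ 1 - 2 * q)]
    · exact aux_down R hconc ε q' q hqI hq'.1 h (by linarith) hRq hR0 hε0 hε1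
  · rcases le_total q' q with h | h
    · refine aux_up R hconc ε q' q hq' hqI h ?_ hR1 hRq' hε0 hε1
      nlinarith [mul_nonneg hε0 (by linarith [hq.2] : (0:ℝ) ≤ 1 - q' - q)]
    · refine aux_down R hconc ε q q' hq' hq.1 h ?_ hRq' hR0 hε0 hε1
      nlinarith [mul_nonneg (mul_nonneg hε0 hε0) hq.1]
end

section
/- Let I be a finite set and p : I → ℝ satisfy 0 ≤ p_i ≤ 1/4 for all i ∈ I and ∑_{i∈I} p_i ≥ 3/4. Then ∏_{i∈I} (1 − p_i) + ∑_{i∈I} p_i · ∏_{j∈I, j≠i} (1 − p_j) ≤ 2 · exp(−3/4). In particular, this quantity is strictly less than 19/20, so for independent events with probabilities p_i, at least two of the events occur simultaneously with probability greater than 1/20. -/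
open Real Finset

lemma exp_quarter_le : Real.exp (1/4) ≤ 4/3 := by
  have h := Real.add_one_le_exp (-(1/4))
  have hx : Real.exp (1/4) * Real.exp (-(1/4)) = 1 := by
    rw [← Real.exp_add]; norm_num
  nlinarith [Real.exp_pos (1/4 : ℝ), Real.exp_pos (-(1/4) : ℝ)]

lemma key_mono {t : ℝ} (ht : 3/4 ≤ t) :
    (1 + (4/3) * t) * Real.exp (-t) ≤ 2 * Real.exp (-(3/4)) := by
  have h1 : 1 + (4/3) * t ≤ 2 * Real.exp (t - 3/4) := by
    have := Real.add_one_le_exp (t - 3/4)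
    nlinarith
  have h2 : (0:ℝ) < Real.exp (-t) := Real.exp_pos _
  calc (1 + (4/3) * t) * Real.exp (-t) ≤ (2 * Real.exp (t - 3/4)) * Real.exp (-t) := by
        exact mul_le_mul_of_nonneg_right h1 h2.le
    _ = 2 * Real.exp (-(3/4)) := by
        rw [mul_assoc, ← Real.exp_add]; ring_nf

lemma exp_34_lt : 2 * Real.exp (-(3/4)) < 19/20 := by
  have h3 : (40/19 : ℝ) < Real.exp (3/4) := by
    have hp : (40/19:ℝ)^4 < Real.exp (3/4) ^ 4 := by
      have h4 : Real.exp (3/4) ^ 4 = Real.exp 3 := by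
        rw [← Real.exp_nat_mul]; norm_num
      have h5 : Real.exp 3 = Real.exp 1 ^ 3 := by
        rw [← Real.exp_nat_mul]; norm_num
      rw [h4, h5]
      have hc := pow_lt_pow_left₀ Real.exp_one_gt_d9 (by norm_num) (by norm_num : 3 ≠ 0)
      nlinarith [hc]
    exact lt_of_pow_lt_pow_left₀ 4 (Real.exp_pos _).le hp
  have h4 : Real.exp (-(3/4)) = (Real.exp (3/4))⁻¹ := Real.exp_neg _
  rw [h4]
  have hmul : Real.exp (3/4) * (Real.exp (3/4))⁻¹ = 1 :=
    mul_inv_cancel₀ (ne_of_gt (Real.exp_pos _))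
  nlinarith [Real.exp_pos (3/4:ℝ), inv_pos.2 (Real.exp_pos (3/4:ℝ))]

/-- If `0 ≤ p i ≤ 1/4` for all `i ∈ I` and `∑ p i ≥ 3/4`, then the probability that
at most one of the corresponding independent events occurs, namely
`∏ (1 - p i) + ∑ p i ∏_{j ≠ i} (1 - p j)`, is at most `2·exp(-3/4)`, and in
particular strictly less than `19/20`. -/
theorem stmt_6 {α : Type*} [DecidableEq α] (I : Finset α) (p : α → ℝ)
    (h0 : ∀ i ∈ I, 0 ≤ p i) (h1 : ∀ i ∈ I, p i ≤ 1/4)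
    (hsum : 3/4 ≤ ∑ i ∈ I, p i) :
    (∏ i ∈ I, (1 - p i)) + (∑ i ∈ I, p i * ∏ j ∈ I.erase i, (1 - p j))
        ≤ 2 * Real.exp (-(3/4)) ∧
      (∏ i ∈ I, (1 - p i)) + (∑ i ∈ I, p i * ∏ j ∈ I.erase i, (1 - p j))
        < 19/20 := by
  set t := ∑ i ∈ I, p i with ht
  have hQ : (∏ i ∈ I, (1 - p i)) ≤ Real.exp (-t) := by
    calc (∏ i ∈ I, (1 - p i)) ≤ ∏ i ∈ I, Real.exp (-(p i)) := by
          apply Finset.prod_le_prod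
          · intro i hi; linarith [h1 i hi]
          · intro i hi; have := Real.add_one_le_exp (-(p i)); linarith
      _ = Real.exp (-t) := by rw [← Real.exp_sum, ht, ← Finset.sum_neg_distrib]
  have hS : (∑ i ∈ I, p i * ∏ j ∈ I.erase i, (1 - p j)) ≤ t * ((4/3) * Real.exp (-t)) := by
    rw [ht, Finset.sum_mul]
    apply Finset.sum_le_sum
    intro i hi
    have hpi0 := h0 i hi
    have hterm : (∏ j ∈ I.erase i, (1 - p j)) ≤ (4/3) * Real.exp (-t) := by
      have h1' : (∏ j ∈ I.erase i, (1 - p j)) ≤ Real.exp (-(∑ j ∈ I.erase i, p j)) := by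
        calc (∏ j ∈ I.erase i, (1 - p j)) ≤ ∏ j ∈ I.erase i, Real.exp (-(p j)) := by
              apply Finset.prod_le_prod
              · intro j hj; have := h1 j (Finset.mem_of_mem_erase hj); linarith
              · intro j hj; have := Real.add_one_le_exp (-(p j)); linarith
          _ = Real.exp (-(∑ j ∈ I.erase i, p j)) := by
              rw [← Real.exp_sum, ← Finset.sum_neg_distrib]
      have hsum' : ∑ j ∈ I.erase i, p j = t - p i := by
        rw [ht, ← Finset.add_sum_erase I p hi]; ring
      rw [hsum'] at h1'
      calc (∏ j ∈ I.erase i, (1 - p j)) ≤ Real.exp (-(t - p i)) := h1'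
        _ ≤ Real.exp (1/4) * Real.exp (-t) := by
            rw [← Real.exp_add]
            apply Real.exp_le_exp.2
            linarith [h1 i hi]
        _ ≤ (4/3) * Real.exp (-t) := by
            exact mul_le_mul_of_nonneg_right exp_quarter_le (Real.exp_pos _).le
    exact mul_le_mul_of_nonneg_left hterm hpi0
  have htotal : (∏ i ∈ I, (1 - p i)) + (∑ i ∈ I, p i * ∏ j ∈ I.erase i, (1 - p j))
      ≤ 2 * Real.exp (-(3/4)) := by
    calc _ ≤ Real.exp (-t) + t * ((4/3) * Real.exp (-t)) := add_le_add hQ hS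
      _ = (1 + (4/3) * t) * Real.exp (-t) := by ring
      _ ≤ 2 * Real.exp (-(3/4)) := key_mono hsum
  exact ⟨htotal, lt_of_le_of_lt htotal exp_34_lt⟩
end

section
/- Let I be a finite set and p : I → ℝ satisfy 0 ≤ p_i ≤ 1/4 for all i ∈ I, and set s = ∑_{i∈I} p_i. Then ∑_{i∈I} p_i · ∏_{j∈I, j≠i} (1 − p_j) ≤ exp(1/4) · s · exp(−s). Moreover, if s ≥ 3/4, then ∑_{i∈I} p_i · ∏_{j∈I, j≠i} (1 − p_j) ≤ exp(−3/4). -/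
lemma aux_xexp (x : ℝ) : x * Real.exp (-x) ≤ Real.exp (-1) := by
  rcases le_or_gt x 0 with hx | hx
  · exact le_trans (mul_nonpos_of_nonpos_of_nonneg hx (Real.exp_pos _).le)
      (Real.exp_pos _).le
  · have h : x ≤ Real.exp (x - 1) := by
      have := Real.add_one_le_exp (x - 1)
      linarith
    calc x * Real.exp (-x) ≤ Real.exp (x - 1) * Real.exp (-x) := by
          exact mul_le_mul_of_nonneg_right h (Real.exp_pos _).le
      _ = Real.exp (-1) := by rw [← Real.exp_add]; ring_nf

/-- If `0 ≤ p i ≤ 1/4` for all `i ∈ I` with `s = ∑ p i`, then the probability that exactly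
one of the corresponding independent events occurs, `∑ p i ∏_{j ≠ i} (1 - p j)`, is at most
`exp(1/4) · s · exp(-s)`; moreover if `s ≥ 3/4` it is at most `exp(-3/4)`. -/
theorem stmt_7 {α : Type*} [DecidableEq α] (I : Finset α) (p : α → ℝ)
    (h0 : ∀ i ∈ I, 0 ≤ p i) (h1 : ∀ i ∈ I, p i ≤ 1/4) :
    (∑ i ∈ I, p i * ∏ j ∈ I.erase i, (1 - p j))
        ≤ Real.exp (1/4) * (∑ i ∈ I, p i) * Real.exp (-(∑ i ∈ I, p i)) ∧
      (3/4 ≤ ∑ i ∈ I, p i →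
        (∑ i ∈ I, p i * ∏ j ∈ I.erase i, (1 - p j)) ≤ Real.exp (-(3/4))) := by
  set s := ∑ i ∈ I, p i with hs
  have hmain : (∑ i ∈ I, p i * ∏ j ∈ I.erase i, (1 - p j))
      ≤ Real.exp (1/4) * s * Real.exp (-s) := by
    have hterm : ∀ i ∈ I, p i * ∏ j ∈ I.erase i, (1 - p j)
        ≤ Real.exp (1/4) * Real.exp (-s) * p i := by
      intro i hi
      have hprod : (∏ j ∈ I.erase i, (1 - p j)) ≤ ∏ j ∈ I.erase i, Real.exp (-p j) := by
        apply Finset.prod_le_prod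
        · intro j hj
          have := h1 j (Finset.mem_of_mem_erase hj); linarith
        · intro j hj
          have := Real.add_one_le_exp (-p j); linarith
      have hsum : ∑ j ∈ I.erase i, p j = s - p i := by
        rw [hs, ← Finset.add_sum_erase I p hi]; ring
      rw [← Real.exp_sum, Finset.sum_neg_distrib, hsum] at hprod
      have hpi0 := h0 i hi
      have hpi1 := h1 i hi
      calc p i * ∏ j ∈ I.erase i, (1 - p j) ≤ p i * Real.exp (-(s - p i)) :=
            mul_le_mul_of_nonneg_left hprod hpi0
        _ ≤ p i * (Real.exp (1/4) * Real.exp (-s)) := by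
            apply mul_le_mul_of_nonneg_left _ hpi0
            rw [← Real.exp_add]
            apply Real.exp_le_exp.2; linarith
        _ = Real.exp (1/4) * Real.exp (-s) * p i := by ring
    calc (∑ i ∈ I, p i * ∏ j ∈ I.erase i, (1 - p j))
        ≤ ∑ i ∈ I, Real.exp (1/4) * Real.exp (-s) * p i := Finset.sum_le_sum hterm
      _ = Real.exp (1/4) * s * Real.exp (-s) := by rw [← Finset.mul_sum]; ring
  refine ⟨hmain, fun _ => hmain.trans ?_⟩
  have := aux_xexp s
  calc Real.exp (1/4) * s * Real.exp (-s) = Real.exp (1/4) * (s * Real.exp (-s)) := by ring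
    _ ≤ Real.exp (1/4) * Real.exp (-1) :=
        mul_le_mul_of_nonneg_left this (Real.exp_pos _).le
    _ = Real.exp (-(3/4)) := by rw [← Real.exp_add]; norm_num
end

section
/- Let S be a finite set, let C > 0 be a real number, and for each i ∈ S let R_i : ℝ → ℝ be concave on [0,1] and nonnegative on [0,1]. Suppose for each i ∈ S there are real numbers q_i, q'_i with 0 ≤ q_i ≤ q'_i ≤ 1/4 such that R_i(q'_i) = (C/2) · q'_i, and suppose ∑_{i∈S} R_i(q_i) ≥ C/2. Then ∑_{i∈S} q'_i ≥ 3/4. -/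
/-- If for each `i ∈ S` the curve `R i` is concave and nonnegative on `[0,1]`,
`0 ≤ q i ≤ q' i ≤ 1/4`, `R i (q' i) = (C/2) · q' i`, and `∑_{i∈S} R i (q i) ≥ C/2`,
then `∑_{i∈S} q' i ≥ 3/4`. -/
theorem stmt_8 {α : Type*} (S : Finset α) (C : ℝ) (hC : 0 < C)
    (R : α → ℝ → ℝ) (q q' : α → ℝ)
    (hconc : ∀ i ∈ S, ConcaveOn ℝ (Set.Icc (0:ℝ) 1) (R i))
    (hnonneg : ∀ i ∈ S, ∀ t ∈ Set.Icc (0:ℝ) 1, 0 ≤ R i t)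
    (hq0 : ∀ i ∈ S, 0 ≤ q i) (hqq' : ∀ i ∈ S, q i ≤ q' i)
    (hq'4 : ∀ i ∈ S, q' i ≤ 1/4)
    (hprice : ∀ i ∈ S, R i (q' i) = C / 2 * q' i)
    (hsum : C / 2 ≤ ∑ i ∈ S, R i (q i)) :
    3/4 ≤ ∑ i ∈ S, q' i := by
  have key : ∀ i ∈ S, R i (q i) ≤ 2 * C / 3 * q' i := by
    intro i hi
    have hq0i := hq0 i hi
    have hqq'i := hqq' i hi
    have hq'4i := hq'4 i hi
    have hq'0 : (0:ℝ) ≤ q' i := le_trans hq0i hqq'i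
    have hq1 : q i ≤ 1 := by linarith
    have hqmem : q i ∈ Set.Icc (0:ℝ) 1 := ⟨hq0i, hq1⟩
    have h1mem : (1:ℝ) ∈ Set.Icc (0:ℝ) 1 := ⟨by norm_num, le_refl 1⟩
    set a : ℝ := (1 - q' i) / (1 - q i) with ha
    have hden : (0:ℝ) < 1 - q i := by linarith
    have ha0 : 0 ≤ a := div_nonneg (by linarith) hden.le
    have hb0 : 0 ≤ 1 - a := by
      rw [sub_nonneg, ha, div_le_one hden]
      linarith
    have hab : a + (1 - a) = 1 := by ring
    have hcomb := (hconc i hi).2 hqmem h1mem ha0 hb0 hab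
    have hpt : a • q i + (1 - a) • (1:ℝ) = q' i := by
      simp only [smul_eq_mul, mul_one, ha]
      field_simp
      ring
    rw [hpt] at hcomb
    have hR1 : 0 ≤ R i 1 := hnonneg i hi 1 h1mem
    have haR : a * R i (q i) ≤ C / 2 * q' i := by
      have := hprice i hi
      simp only [smul_eq_mul, mul_one] at hcomb
      nlinarith
    -- a ≥ (3/4)/(1 - q i) ≥ 3/4, so R i (q i) ≤ (C/2 * q') / a ≤ (2C/3) q'
    have haval : a * (1 - q i) = 1 - q' i := by
      rw [ha]; field_simp
    have ha34 : 3/4 ≤ a := by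
      nlinarith
    have hRnn : 0 ≤ R i (q i) := hnonneg i hi _ hqmem
    nlinarith
  have hsum2 : ∑ i ∈ S, R i (q i) ≤ ∑ i ∈ S, 2 * C / 3 * q' i :=
    Finset.sum_le_sum key
  rw [← Finset.mul_sum] at hsum2
  have hCpos : 0 < 2 * C / 3 := by linarith
  nlinarith [le_trans hsum hsum2]
end

section
/- Let g : ℝ → ℝ be continuous on [0,1] and concave on [0,1] with g(0) ≥ 0 and g(1) ≥ 0. Then for every q* ∈ [0,1], the integral ∫_0^1 g(t) dt is at least g(q*)/2. (Twice the area under a concave revenue curve is at least its maximum value; this is the geometric core of the single-bidder Bulow–Klemperer argument.) -/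
/-!
A concave function lies above each of its chords, so integrating the chord of `g` over
`[a, b]` gives the trapezoid bound `(b - a) (g a + g b) / 2 ≤ ∫_a^b g`. Splitting `[0, 1]` at
`q*` and applying this on both pieces, with `g 0, g 1 ≥ 0`, yields
`∫_0^1 g ≥ q* g(q*) / 2 + (1 - q*) g(q*) / 2 = g(q*) / 2`.
-/

open Set intervalIntegral

theorem ConcaveOn.chord_le {g : ℝ → ℝ} {a b x : ℝ} (hg : ConcaveOn ℝ (Icc a b) g)
    (hx : x ∈ Icc a b) : (b - x) * g a + (x - a) * g b ≤ (b - a) * g x := by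
  obtain ⟨hax, hxb⟩ := hx
  rcases hax.eq_or_lt with rfl | hax
  · simp
  have hab : 0 < b - a := by linarith
  have hconv := hg.2 (left_mem_Icc.2 (hax.le.trans hxb)) (right_mem_Icc.2 (hax.le.trans hxb))
    (div_nonneg (sub_nonneg.2 hxb) hab.le) (div_nonneg (sub_nonneg.2 hax.le) hab.le)
    (by field_simp; ring)
  have hpt : ((b - x) / (b - a)) • a + ((x - a) / (b - a)) • b = x := by
    simp only [smul_eq_mul]; field_simp; ring
  rw [hpt, smul_eq_mul, smul_eq_mul] at hconv
  calc (b - x) * g a + (x - a) * g b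
      = (b - a) * ((b - x) / (b - a) * g a + (x - a) / (b - a) * g b) := by field_simp
    _ ≤ (b - a) * g x := by gcongr

theorem integral_chord (a b c d : ℝ) :
    ∫ x in a..b, ((b - x) * c + (x - a) * d) = (b - a) ^ 2 * (c + d) / 2 := by
  rw [integral_add, integral_mul_const, integral_mul_const, integral_sub, integral_sub]
  · simp
    ring
  all_goals exact Continuous.intervalIntegrable (by fun_prop) _ _

theorem ConcaveOn.trapezoid_le_integral {g : ℝ → ℝ} {a b : ℝ} (hg : ConcaveOn ℝ (Icc a b) g)
    (hab : a ≤ b) (hcont : ContinuousOn g (Icc a b)) :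
    (b - a) * (g a + g b) / 2 ≤ ∫ x in a..b, g x := by
  rcases hab.eq_or_lt with rfl | hab
  · simp
  have hmono : ∫ x in a..b, ((b - x) * g a + (x - a) * g b) ≤ ∫ x in a..b, (b - a) * g x :=
    integral_mono_on hab.le (Continuous.intervalIntegrable (by fun_prop) _ _)
      ((hcont.intervalIntegrable_of_Icc hab.le).const_mul _) fun x hx ↦ hg.chord_le hx
  rw [integral_chord, integral_const_mul] at hmono
  have hba : 0 < b - a := by linarith
  nlinarith

/-- For `g` continuous and concave on `[0,1]` with `g 0 ≥ 0` and `g 1 ≥ 0`,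
the area under `g` over `[0,1]` is at least half of `g q*` for every `q* ∈ [0,1]`. -/
theorem stmt_9 (g : ℝ → ℝ)
    (hcont : ContinuousOn g (Set.Icc (0:ℝ) 1))
    (hconc : ConcaveOn ℝ (Set.Icc (0:ℝ) 1) g)
    (h0 : 0 ≤ g 0) (h1 : 0 ≤ g 1)
    (qstar : ℝ) (hq : qstar ∈ Set.Icc (0:ℝ) 1) :
    g qstar / 2 ≤ ∫ t in (0:ℝ)..1, g t := by
  obtain ⟨hq0, hq1⟩ := hq
  have hleft : Icc 0 qstar ⊆ Icc (0:ℝ) 1 := Icc_subset_Icc le_rfl hq1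
  have hright : Icc qstar 1 ⊆ Icc (0:ℝ) 1 := Icc_subset_Icc hq0 le_rfl
  have hA := (hconc.subset hleft (convex_Icc _ _)).trapezoid_le_integral hq0 (hcont.mono hleft)
  have hB := (hconc.subset hright (convex_Icc _ _)).trapezoid_le_integral hq1 (hcont.mono hright)
  rw [← integral_add_adjacent_intervals ((hcont.mono hleft).intervalIntegrable_of_Icc hq0)
    ((hcont.mono hright).intervalIntegrable_of_Icc hq1)]
  nlinarith [mul_nonneg hq0 h0, mul_nonneg (sub_nonneg.2 hq1) h1]
end

section
/- Let g : ℝ → ℝ be continuous on [0,1] and concave on [0,1] with g(0) ≥ 0 and g(1) ≥ 0. Then for all real numbers q*, q̄ with 0 ≤ q* ≤ q̄ ≤ 1, it holds that 2 · ∫_0^{q̄} g(t) dt + g(q̄) · (1 − q̄) ≥ g(q*). (This quantity is the revenue that the second-price auction with a duplicate extracts from a bidder and her duplicate when the highest competing bid has quantile q̄; it is at least the monopoly revenue g(q*).) -/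
/-!
A concave function lies above its chords. On `[0, q*]` and on `[q*, q̄]` this bounds the
integral of `g` below by the trapezoid under the chord (the easy half of Hermite–Hadamard), and
the chord from `q*` to `1`, where `g 1 ≥ 0`, gives `g q̄ · (1 - q*) ≥ g q* · (1 - q̄)`. Adding
these, the trapezoids and the rectangle recombine into exactly `g q*` plus nonnegative terms.
-/

open Set

section Chord

variable {𝕜 : Type*} [Field 𝕜] [LinearOrder 𝕜] [IsStrictOrderedRing 𝕜] {s : Set 𝕜} {g : 𝕜 → 𝕜}

theorem ConcaveOn.sub_mul_add_sub_mul_le (hg : ConcaveOn 𝕜 s g) {a b t : 𝕜} (ha : a ∈ s)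
    (hb : b ∈ s) (hat : a ≤ t) (htb : t ≤ b) :
    (b - t) * g a + (t - a) * g b ≤ (b - a) * g t := by
  rcases hat.eq_or_lt with rfl | hat'
  · simp
  have hab : 0 < b - a := by linarith
  have key := hg.2 ha hb (div_nonneg (sub_nonneg.2 htb) hab.le)
    (div_nonneg (sub_nonneg.2 hat) hab.le) (by field_simp; ring)
  have ht : (b - t) / (b - a) * a + (t - a) / (b - a) * b = t := by field_simp; ring
  simp only [smul_eq_mul, ht] at key
  calc (b - t) * g a + (t - a) * g b
      = (b - a) * ((b - t) / (b - a) * g a + (t - a) / (b - a) * g b) := by field_simp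
    _ ≤ (b - a) * g t := mul_le_mul_of_nonneg_left key hab.le

end Chord

theorem ConcaveOn.sub_mul_add_le_two_mul_integral {g : ℝ → ℝ} {a b : ℝ}
    (hg : ConcaveOn ℝ (Icc a b) g) (hcont : ContinuousOn g (Icc a b)) (hab : a ≤ b) :
    (b - a) * (g a + g b) ≤ 2 * ∫ t in a..b, g t := by
  rcases hab.eq_or_lt with rfl | hab'
  · simp
  have hchord : ∀ t ∈ Icc a b, (b - t) * g a + (t - a) * g b ≤ (b - a) * g t := fun t ht =>
    hg.sub_mul_add_sub_mul_le (left_mem_Icc.2 hab) (right_mem_Icc.2 hab) ht.1 ht.2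
  have hint := intervalIntegral.integral_mono_on hab
    (Continuous.intervalIntegrable (by fun_prop) a b)
    ((hcont.intervalIntegrable_of_Icc (μ := MeasureTheory.volume) hab).const_mul (b - a)) hchord
  have hchord_int :
      ∫ t in a..b, ((b - t) * g a + (t - a) * g b) = (b - a) ^ 2 / 2 * (g a + g b) := by
    have hlin : (fun t => (b - t) * g a + (t - a) * g b)
        = fun t => (g b - g a) * t + (b * g a - a * g b) := by
      ext t; ring
    rw [hlin, intervalIntegral.integral_add (Continuous.intervalIntegrable (by fun_prop) a b)
      intervalIntegrable_const, intervalIntegral.integral_const_mul, integral_id,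
      intervalIntegral.integral_const, smul_eq_mul]
    ring
  rw [hchord_int, intervalIntegral.integral_const_mul] at hint
  refine le_of_mul_le_mul_left ?_ (sub_pos.2 hab')
  linarith

/-- For `g` continuous and concave on `[0,1]` with `g 0 ≥ 0` and `g 1 ≥ 0`, and
`0 ≤ q* ≤ q̄ ≤ 1`, twice the area under `g` on `[0, q̄]` plus the rectangle
`g(q̄) · (1 - q̄)` is at least `g(q*)`. -/
theorem stmt_10 (g : ℝ → ℝ)
    (hcont : ContinuousOn g (Set.Icc (0:ℝ) 1))
    (hconc : ConcaveOn ℝ (Set.Icc (0:ℝ) 1) g)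
    (h0 : 0 ≤ g 0) (h1 : 0 ≤ g 1)
    (qstar qbar : ℝ) (h0q : 0 ≤ qstar) (hqq : qstar ≤ qbar) (hq1 : qbar ≤ 1) :
    g qstar ≤ 2 * (∫ t in (0:ℝ)..qbar, g t) + g qbar * (1 - qbar) := by
  have hs : qstar ∈ Icc (0:ℝ) 1 := ⟨h0q, hqq.trans hq1⟩
  have hsub₁ : Icc 0 qstar ⊆ Icc (0:ℝ) 1 := Icc_subset_Icc le_rfl hs.2
  have hsub₂ : Icc qstar qbar ⊆ Icc (0:ℝ) 1 := Icc_subset_Icc h0q hq1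
  have hleft := (hconc.subset hsub₁ (convex_Icc _ _)).sub_mul_add_le_two_mul_integral
    (hcont.mono hsub₁) h0q
  have hright := (hconc.subset hsub₂ (convex_Icc _ _)).sub_mul_add_le_two_mul_integral
    (hcont.mono hsub₂) hqq
  have hsplit :
      ∫ t in (0:ℝ)..qbar, g t = (∫ t in (0:ℝ)..qstar, g t) + ∫ t in qstar..qbar, g t :=
    (intervalIntegral.integral_add_adjacent_intervals
      ((hcont.mono hsub₁).intervalIntegrable_of_Icc h0q)
      ((hcont.mono hsub₂).intervalIntegrable_of_Icc hqq)).symm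
  have hchord := hconc.sub_mul_add_sub_mul_le hs (right_mem_Icc.2 zero_le_one) hqq hq1
  have hleft_end : 0 ≤ qstar * g 0 := mul_nonneg h0q h0
  have hright_end : 0 ≤ (qbar - qstar) * g 1 := mul_nonneg (sub_nonneg.2 hqq) h1
  rw [hsplit]
  linarith
end

section
/- Let n ≥ 1 and for each i ∈ {1,…,n} let R_i : ℝ → ℝ be concave on [0,1] with R_i(0) = R_i(1) = 0. Let q* ∈ [0,1]^n with ∑_i q*_i ≤ 1 and 0 < q*_i < 1 for each i be a maximizer of ∑_i R_i(q_i) over the feasible set {q ∈ [0,1]^n : ∑_i q_i ≤ 1}. For each i define the triangle curve T_i : [0,1] → ℝ by T_i(q) = R_i(q*_i) · q / q*_i for 0 ≤ q ≤ q*_i and T_i(q) = R_i(q*_i) · (1 − q) / (1 − q*_i) for q*_i ≤ q ≤ 1. Then q* remains a maximizer after the replacement: for every q ∈ [0,1]^n with ∑_i q_i ≤ 1, ∑_i T_i(q_i) ≤ ∑_i T_i(q*_i) = ∑_i R_i(q*_i). -/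
lemma tri_le (R : ℝ → ℝ) (hconc : ConcaveOn ℝ (Set.Icc (0:ℝ) 1) R)
    (hR0 : R 0 = 0) (hR1 : R 1 = 0) (qs : ℝ) (h0 : 0 < qs) (h1 : qs < 1)
    (q : ℝ) (hq : q ∈ Set.Icc (0:ℝ) 1) :
    (if q ≤ qs then R qs * q / qs else R qs * (1 - q) / (1 - qs)) ≤ R q := by
  obtain ⟨hq0, hq1⟩ := hq
  have hqs : qs ∈ Set.Icc (0:ℝ) 1 := ⟨h0.le, h1.le⟩
  split_ifs with h
  · have ha : 0 ≤ q / qs := div_nonneg hq0 h0.le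
    have hb : 0 ≤ 1 - q / qs := by
      have : q / qs ≤ 1 := (div_le_one h0).mpr h
      linarith
    have := hconc.2 hqs (Set.mem_Icc.mpr ⟨le_refl 0, by norm_num⟩) ha hb (by ring)
    simp only [smul_eq_mul, hR0, mul_zero, add_zero, mul_zero] at this
    have hx : q / qs * qs = q := div_mul_cancel₀ q h0.ne'
    rw [hx] at this
    calc R qs * q / qs = q / qs * R qs := by ring
    _ ≤ R q := this
  · push_neg at h
    have hd : 0 < 1 - qs := by linarith
    have ha : 0 ≤ (1 - q) / (1 - qs) := div_nonneg (by linarith) hd.le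
    have hb : 0 ≤ 1 - (1 - q) / (1 - qs) := by
      have : (1 - q) / (1 - qs) ≤ 1 := (div_le_one hd).mpr (by linarith)
      linarith
    have := hconc.2 hqs (Set.mem_Icc.mpr ⟨by norm_num, le_refl 1⟩) ha hb (by ring)
    simp only [smul_eq_mul, hR1, mul_zero, add_zero, mul_one] at this
    have hx : (1 - q) / (1 - qs) * qs + (1 - (1 - q) / (1 - qs)) = q := by
      field_simp
      ring
    rw [hx] at this
    calc R qs * (1 - q) / (1 - qs) = (1 - q) / (1 - qs) * R qs := by ring
    _ ≤ R q := this

/-- **Triangle replacement preserves the ex ante optimum.** If `q*` (interior, feasible)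
maximizes `∑ Rᵢ(qᵢ)` over the ex ante feasible set, and each `Rᵢ` is replaced by the triangle
curve `Tᵢ` with vertices `(0,0)`, `(q*ᵢ, Rᵢ(q*ᵢ))`, `(1,0)`, then `q*` remains a maximizer,
with the same optimal value. -/
theorem stmt_13 (n : ℕ) (hn : 1 ≤ n) (R : Fin n → ℝ → ℝ)
    (hconc : ∀ i, ConcaveOn ℝ (Set.Icc (0:ℝ) 1) (R i))
    (hR0 : ∀ i, R i 0 = 0) (hR1 : ∀ i, R i 1 = 0)
    (qstar : Fin n → ℝ)
    (hq0 : ∀ i, 0 < qstar i) (hq1 : ∀ i, qstar i < 1)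
    (hqsum : ∑ i, qstar i ≤ 1)
    (hmax : ∀ q : Fin n → ℝ, (∀ i, q i ∈ Set.Icc (0:ℝ) 1) → ∑ i, q i ≤ 1 →
      ∑ i, R i (q i) ≤ ∑ i, R i (qstar i))
    (T : Fin n → ℝ → ℝ)
    (hT : ∀ i, ∀ q ∈ Set.Icc (0:ℝ) 1,
      T i q = if q ≤ qstar i then R i (qstar i) * q / qstar i
        else R i (qstar i) * (1 - q) / (1 - qstar i)) :
    (∀ q : Fin n → ℝ, (∀ i, q i ∈ Set.Icc (0:ℝ) 1) → ∑ i, q i ≤ 1 →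
      ∑ i, T i (q i) ≤ ∑ i, T i (qstar i)) ∧
    ∑ i, T i (qstar i) = ∑ i, R i (qstar i) := by
  have hTstar : ∀ i, T i (qstar i) = R i (qstar i) := by
    intro i
    rw [hT i (qstar i) ⟨(hq0 i).le, (hq1 i).le⟩, if_pos le_rfl,
      mul_div_assoc, div_self (hq0 i).ne', mul_one]
  have hsumTstar : ∑ i, T i (qstar i) = ∑ i, R i (qstar i) :=
    Finset.sum_congr rfl fun i _ => hTstar i
  refine ⟨fun q hq hsum => ?_, hsumTstar⟩
  have hTle : ∀ i, T i (q i) ≤ R i (q i) := fun i => by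
    rw [hT i (q i) (hq i)]
    exact tri_le (R i) (hconc i) (hR0 i) (hR1 i) (qstar i) (hq0 i) (hq1 i) (q i) (hq i)
  calc ∑ i, T i (q i) ≤ ∑ i, R i (q i) := Finset.sum_le_sum fun i _ => hTle i
  _ ≤ ∑ i, R i (qstar i) := hmax q hq hsum
  _ = ∑ i, T i (qstar i) := hsumTstar.symm
end

section
/- For all real numbers α > 0, q_1 with 0 < q_1 < 1, and q_2 with 0 < q_2 ≤ 1 − q_1, it holds that 1 + α²(1 − q_1) / (q_2 + (1 − q_1)α) ≥ (3/4)(1 + α). Equivalently, the ratio (1 + α²(1 − q_1)/(q_2 + (1 − q_1)α)) / (1 + α) is at least 3/4; when q_2 = 1 − q_1 the ratio equals (1 + α + α²)/(1 + α)², which is minimized at α = 1 with value 3/4. -/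
/-- For `α > 0`, `0 < q₁ < 1` and `0 < q₂ ≤ 1 - q₁`, we have
`1 + α²(1-q₁)/(q₂ + (1-q₁)α) ≥ (3/4)(1+α)`; moreover when `q₂ = 1 - q₁`
the ratio `(1 + α²(1-q₁)/(q₂+(1-q₁)α))/(1+α)` equals `(1+α+α²)/(1+α)²`,
which is minimized at `α = 1` with value `3/4`. -/
theorem stmt_14 (α q₁ q₂ : ℝ) (hα : 0 < α) (hq₁0 : 0 < q₁) (hq₁1 : q₁ < 1)
    (hq₂0 : 0 < q₂) (hq₂ : q₂ ≤ 1 - q₁) :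
    3/4 * (1 + α) ≤ 1 + α^2 * (1 - q₁) / (q₂ + (1 - q₁) * α) ∧
      (q₂ = 1 - q₁ →
        (1 + α^2 * (1 - q₁) / (q₂ + (1 - q₁) * α)) / (1 + α)
          = (1 + α + α^2) / (1 + α)^2) ∧
      (3/4 : ℝ) = (1 + 1 + 1^2) / ((1 + 1)^2 : ℝ) := by
  have h1q : 0 < 1 - q₁ := by linarith
  have hD : 0 < q₂ + (1 - q₁) * α := by positivity
  have hDle : q₂ + (1 - q₁) * α ≤ (1 - q₁) * (1 + α) := by nlinarith
  refine ⟨?_, ?_, by norm_num⟩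
  · have key : α^2 / (1 + α) ≤ α^2 * (1 - q₁) / (q₂ + (1 - q₁) * α) := by
      rw [div_le_div_iff₀ (by linarith) hD]
      nlinarith [sq_nonneg α]
    have h2 : 3/4 * (1 + α) ≤ 1 + α^2 / (1 + α) := by
      rw [← sub_nonneg]
      have : 1 + α^2 / (1 + α) - 3/4 * (1 + α) = (α - 1)^2 / (4 * (1 + α)) := by
        field_simp; ring
      rw [this]; positivity
    linarith
  · intro h
    subst h
    have hne : (1 - q₁) + (1 - q₁) * α ≠ 0 := by positivity
    field_simp
end

section
/- Let X and Y be independent, identically distributed nonnegative random variables with P(X > v) = 1/(1 + v) for every v ≥ 0. Then E[max(1, min(X, Y))] = 3/2. (This is the expected second-highest value among the four bids 1, 1, X, Y, i.e., the revenue of the Vickrey auction in Hartline–Roughgarden's lower-bound example with both bidders duplicated, compared to an optimal revenue approaching 2.) -/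
/-! Since the bid `1` is always present, the layer-cake formula gives
`E[max(1, min(X, Y))] = 1 + ∫_1^∞ P(min(X, Y) > t) dt`, and by independence
`P(min(X, Y) > t) = P(X > t) P(Y > t) = 1 / (1 + t)^2`, whose integral over `(1, ∞)` is `1/2`. -/

open MeasureTheory ProbabilityTheory Set Filter Topology

lemma hasDerivAt_neg_inv_one_add {t : ℝ} (ht : 1 + t ≠ 0) :
    HasDerivAt (fun x : ℝ => -(1 + x)⁻¹) (1 / (1 + t) ^ 2) t := by
  refine (((hasDerivAt_id t).const_add 1).inv ht).neg.congr_deriv ?_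
  simp only [id]
  ring

lemma tendsto_neg_inv_one_add_atTop :
    Tendsto (fun x : ℝ => -(1 + x)⁻¹) atTop (𝓝 0) := by
  simpa using
    (tendsto_inv_atTop_zero.comp (tendsto_atTop_add_const_left atTop (1 : ℝ) tendsto_id)).neg

lemma lintegral_Ioi_ofReal_one_div_one_add_sq {a : ℝ} (ha : -1 < a) :
    ∫⁻ t in Ioi a, ENNReal.ofReal (1 / (1 + t) ^ 2) = ENNReal.ofReal (1 / (1 + a)) := by
  have hderiv : ∀ t ∈ Ici a, HasDerivAt (fun x : ℝ => -(1 + x)⁻¹) (1 / (1 + t) ^ 2) t :=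
    fun t ht => hasDerivAt_neg_inv_one_add (by linarith [mem_Ici.mp ht])
  have hnonneg : ∀ t ∈ Ioi a, (0 : ℝ) ≤ 1 / (1 + t) ^ 2 := fun t _ => by positivity
  rw [← ofReal_integral_eq_lintegral_ofReal
      (integrableOn_Ioi_deriv_of_nonneg' hderiv hnonneg tendsto_neg_inv_one_add_atTop)
      (ae_of_all _ fun t => by positivity),
    integral_Ioi_of_hasDerivAt_of_nonneg' hderiv hnonneg tendsto_neg_inv_one_add_atTop]
  simp

lemma ProbabilityTheory.IndepFun.measure_lt_min {Ω β : Type*} [MeasurableSpace Ω] {μ : Measure Ω}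
    [LinearOrder β] [TopologicalSpace β] [OrderClosedTopology β] [MeasurableSpace β]
    [OpensMeasurableSpace β] {X Y : Ω → β} (hXY : IndepFun X Y μ) (t : β) :
    μ {ω | t < min (X ω) (Y ω)} = μ {ω | t < X ω} * μ {ω | t < Y ω} := by
  have hset : {ω | t < min (X ω) (Y ω)} = X ⁻¹' Ioi t ∩ Y ⁻¹' Ioi t := by ext; simp
  rw [hset]
  exact hXY.measure_inter_preimage_eq_mul (Ioi t) (Ioi t) measurableSet_Ioi measurableSet_Ioi

lemma lintegral_ofReal_max_const {Ω : Type*} [MeasurableSpace Ω] (μ : Measure Ω)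
    {g : Ω → ℝ} (hg : AEMeasurable g μ) {c : ℝ} (hc : 0 ≤ c) :
    ∫⁻ ω, ENNReal.ofReal (max c (g ω)) ∂μ =
      μ univ * ENNReal.ofReal c + ∫⁻ t in Ioi c, μ {ω | t < g ω} := by
  have below : ∀ t ∈ Ioo 0 c, μ {ω | t < max c (g ω)} = μ univ := fun t ht => by
    simp [ht.2]
  have above : ∀ t ∈ Ioi c, μ {ω | t < max c (g ω)} = μ {ω | t < g ω} := fun t ht => by
    simp [(mem_Ioi.mp ht).not_gt]
  rw [lintegral_eq_lintegral_meas_lt μ (ae_of_all _ fun ω => hc.trans (le_max_left _ _))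
      (aemeasurable_const.max hg), ← Ioc_union_Ioi_eq_Ioi hc,
    lintegral_union measurableSet_Ioi (Ioc_disjoint_Ioi le_rfl),
    setLIntegral_congr Ioo_ae_eq_Ioc.symm, setLIntegral_congr_fun measurableSet_Ioo below,
    setLIntegral_congr_fun measurableSet_Ioi above, setLIntegral_const, Real.volume_Ioo, sub_zero]

theorem stmt_15_general {Ω : Type*} [MeasurableSpace Ω] (μ : Measure Ω) [IsProbabilityMeasure μ]
    (X Y : Ω → ℝ) (hX : Measurable X) (hY : Measurable Y)
    (hindep : IndepFun X Y μ)
    (hXtail : ∀ v : ℝ, 0 ≤ v → (μ {ω | v < X ω}).toReal = 1 / (1 + v))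
    (hYtail : ∀ v : ℝ, 0 ≤ v → (μ {ω | v < Y ω}).toReal = 1 / (1 + v)) :
    ∫ ω, max 1 (min (X ω) (Y ω)) ∂μ = 3/2 := by
  have tail_min : ∀ t ∈ Ioi (1 : ℝ),
      μ {ω | t < min (X ω) (Y ω)} = ENNReal.ofReal (1 / (1 + t) ^ 2) := fun t ht => by
    have ht0 : 0 ≤ t := zero_le_one.trans (le_of_lt ht)
    rw [hindep.measure_lt_min, ← ENNReal.ofReal_toReal (measure_ne_top μ {ω | t < X ω}),
      ← ENNReal.ofReal_toReal (measure_ne_top μ {ω | t < Y ω}), hXtail t ht0, hYtail t ht0,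
      ← ENNReal.ofReal_mul (by positivity)]
    congr 1
    field_simp
  have hlint : ∫⁻ ω, ENNReal.ofReal (max 1 (min (X ω) (Y ω))) ∂μ = ENNReal.ofReal (3 / 2) := by
    rw [lintegral_ofReal_max_const μ (hX.min hY).aemeasurable zero_le_one, measure_univ, one_mul,
      setLIntegral_congr_fun measurableSet_Ioi tail_min,
      lintegral_Ioi_ofReal_one_div_one_add_sq (by norm_num),
      ← ENNReal.ofReal_add zero_le_one (by norm_num)]
    norm_num
  rw [integral_eq_lintegral_of_nonneg_ae (ae_of_all _ fun ω => zero_le_one.trans (le_max_left _ _))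
      (measurable_const.max (hX.min hY)).aestronglyMeasurable, hlint,
    ENNReal.toReal_ofReal (by norm_num)]

/-- **Hartline–Roughgarden lower-bound example, both bidders duplicated.**
If `X, Y` are i.i.d. with `P(X > v) = 1/(1+v)` for `v ≥ 0`, then the expected
second-highest value among the four bids `1, 1, X, Y`, namely
`E[max(1, min(X,Y))]`, equals `3/2`. -/
theorem stmt_15 {Ω : Type*} [MeasurableSpace Ω] (μ : Measure Ω) [IsProbabilityMeasure μ]
    (X Y : Ω → ℝ) (hX : Measurable X) (hY : Measurable Y)
    (hXnn : ∀ ω, 0 ≤ X ω) (hYnn : ∀ ω, 0 ≤ Y ω)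
    (hindep : IndepFun X Y μ)
    (hXtail : ∀ v : ℝ, 0 ≤ v → (μ {ω | v < X ω}).toReal = 1 / (1 + v))
    (hYtail : ∀ v : ℝ, 0 ≤ v → (μ {ω | v < Y ω}).toReal = 1 / (1 + v)) :
    ∫ ω, max 1 (min (X ω) (Y ω)) ∂μ = 3/2 :=
  stmt_15_general μ X Y hX hY hindep hXtail hYtail
end
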